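/- Let X_i ~ Ber(p_i, s_i) with s_i ≤ s_min for all i, be independent scaled Bernoulli variables, and B = Σ_i X_i. If E(B) = Σ_i s_i p_i ≤ μ₀ < 1, then P(B > 1) < s_min · μ₀ / (1 - μ₀)². -/

import Mathlib

open MeasureTheory
open scoped NNReal ENNReal

/-- Scaled Bernoulli distribution `Ber(p, s)`. -/
noncomputable def berS (p : ℝ) (hp : p ≤ 1) (s : ℝ) : PMF ℝ :=
  (PMF.bernoulli (Real.toNNReal p) (Real.toNNReal_le_one.mpr hp)).map
    (fun b => if b then s else 0)

/-- Convolution: distribution of the sum of independent discrete variables. -/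
noncomputable def conv (X Y : PMF ℝ) : PMF ℝ := X.bind fun a => Y.map (fun b => a + b)

/-- Distribution of the sum of independent items. -/
noncomputable def pmfSum {m : ℕ} (f : Fin m → PMF ℝ) : PMF ℝ :=
  (List.ofFn f).foldr conv (PMF.pure 0)

/-!
Chebyshev's inequality. Writing `M = ∑ sᵢ pᵢ` and `V = ∑ sᵢ² pᵢ (1 - pᵢ)`, the second moment
of `B` about any point `c` is `V + (c - M)²`, which is computed summand by summand along the
convolution. With `c = M`, Markov's inequality on `{B > 1} ⊆ {(B - M)² ≥ (1 - μ₀)²}` gives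
`ℙ(B > 1) ≤ V / (1 - μ₀)²`, and `sᵢ² pᵢ (1 - pᵢ) < s_min sᵢ pᵢ` gives `V < s_min μ₀`.
-/

namespace PMF

variable {α β : Type*}

noncomputable def lexpect (μ : PMF α) (g : α → ℝ≥0∞) : ℝ≥0∞ := ∑' x, μ x * g x

lemma lexpect_pure (a : α) (g : α → ℝ≥0∞) : (pure a).lexpect g = g a := by
  rw [lexpect, tsum_eq_single a fun b hb => by simp [pure_apply, hb]]
  simp [pure_apply]

lemma lexpect_bind (μ : PMF α) (f : α → PMF β) (g : β → ℝ≥0∞) :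
    (μ.bind f).lexpect g = ∑' a, μ a * (f a).lexpect g := by
  simp only [lexpect, bind_apply]
  calc ∑' x, (∑' a, μ a * f a x) * g x
      = ∑' x, ∑' a, μ a * (f a x * g x) := by
        simp only [← ENNReal.tsum_mul_right, mul_assoc]
    _ = ∑' a, μ a * ∑' x, f a x * g x := by
        rw [ENNReal.tsum_comm]
        simp only [ENNReal.tsum_mul_left]

lemma lexpect_map (μ : PMF α) (h : α → β) (g : β → ℝ≥0∞) :
    (μ.map h).lexpect g = μ.lexpect (g ∘ h) := by
  rw [← bind_pure_comp, lexpect_bind]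
  simp only [Function.comp_apply, lexpect_pure]
  rfl

lemma toMeasure_mul_le_lexpect [MeasurableSpace α] (μ : PMF α) {S : Set α}
    (hS : MeasurableSet S) {c : ℝ≥0∞} {g : α → ℝ≥0∞} (hg : ∀ x ∈ S, c ≤ g x) :
    μ.toMeasure S * c ≤ μ.lexpect g := by
  rw [toMeasure_apply μ hS, ← ENNReal.tsum_mul_right]
  refine ENNReal.tsum_le_tsum fun x => ?_
  by_cases hx : x ∈ S
  · rw [Set.indicator_of_mem hx]
    gcongr
    exact hg x hx
  · simp [Set.indicator_of_notMem hx]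

end PMF

open PMF

lemma lexpect_conv (X Y : PMF ℝ) (g : ℝ → ℝ≥0∞) :
    (conv X Y).lexpect g = X.lexpect fun a => Y.lexpect fun b => g (a + b) := by
  rw [conv, lexpect_bind, lexpect]
  exact tsum_congr fun a => by rw [lexpect_map]; rfl

lemma lexpect_berS {p : ℝ} (hp0 : 0 ≤ p) (hp1 : p ≤ 1) (s : ℝ) (g : ℝ → ℝ≥0∞) :
    (berS p hp1 s).lexpect g = ENNReal.ofReal p * g s + ENNReal.ofReal (1 - p) * g 0 := by
  rw [berS, lexpect_map, lexpect, tsum_bool]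
  simp only [PMF.bernoulli, ofFintype_apply, Function.comp_apply, cond_true, cond_false, if_true,
    Bool.false_eq_true, if_false]
  rw [ENNReal.ofReal_sub _ hp0, ENNReal.ofReal_one, add_comm]
  rfl

lemma pmfSum_zero (f : Fin 0 → PMF ℝ) : pmfSum f = PMF.pure 0 := rfl

lemma pmfSum_succ {n : ℕ} (f : Fin (n + 1) → PMF ℝ) :
    pmfSum f = conv (f 0) (pmfSum fun i => f i.succ) := by
  simp [pmfSum, List.ofFn_succ]

section Moments

variable {ι : Type*} [Fintype ι]

def berSMean (p s : ι → ℝ) : ℝ := ∑ i, s i * p i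

def berSVar (p s : ι → ℝ) : ℝ := ∑ i, s i ^ 2 * p i * (1 - p i)

lemma berSVar_nonneg {p : ι → ℝ} (hp0 : ∀ i, 0 ≤ p i) (hp1 : ∀ i, p i ≤ 1) (s : ι → ℝ) :
    0 ≤ berSVar p s :=
  Finset.sum_nonneg fun i _ => mul_nonneg (mul_nonneg (sq_nonneg _) (hp0 i)) (by linarith [hp1 i])

lemma berSVar_lt_mul {p s : ι → ℝ} (hp0 : ∀ i, 0 < p i) (hs0 : ∀ i, 0 < s i) {smin : ℝ}
    (hsmin : 0 < smin) (hs : ∀ i, s i ≤ smin) {μ₀ : ℝ} (hμ0 : 0 < μ₀)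
    (hE : berSMean p s ≤ μ₀) : berSVar p s < smin * μ₀ := by
  cases isEmpty_or_nonempty ι
  · simpa [berSVar] using mul_pos hsmin hμ0
  have hterm (i : ι) : s i ^ 2 * p i * (1 - p i) < smin * (s i * p i) := by
    have hsp := mul_pos (hs0 i) (hp0 i)
    calc s i ^ 2 * p i * (1 - p i) = s i * p i * (s i - s i * p i) := by ring
      _ < s i * p i * smin := by gcongr; linarith [hs i]
      _ = smin * (s i * p i) := by ring
  calc berSVar p s < ∑ i, smin * (s i * p i) :=
        Finset.sum_lt_sum_of_nonempty Finset.univ_nonempty fun i _ => hterm i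
    _ = smin * berSMean p s := by rw [berSMean, Finset.mul_sum]
    _ ≤ smin * μ₀ := by gcongr

end Moments

lemma lexpect_pmfSum_berS_sq_sub {m : ℕ} (p s : Fin m → ℝ) (hp0 : ∀ i, 0 ≤ p i)
    (hp1 : ∀ i, p i ≤ 1) (c : ℝ) :
    (pmfSum fun i => berS (p i) (hp1 i) (s i)).lexpect (fun x => ENNReal.ofReal ((x - c) ^ 2))
      = ENNReal.ofReal (berSVar p s + (c - berSMean p s) ^ 2) := by
  induction m generalizing c with
  | zero => simp [pmfSum_zero, lexpect_pure, berSVar, berSMean]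
  | succ n ih =>
    set Y := pmfSum fun i : Fin n => berS (p i.succ) (hp1 i.succ) (s i.succ)
    have hY (a : ℝ) : Y.lexpect (fun b => ENNReal.ofReal ((a + b - c) ^ 2)) =
        ENNReal.ofReal (berSVar (p ∘ Fin.succ) (s ∘ Fin.succ)
          + (c - a - berSMean (p ∘ Fin.succ) (s ∘ Fin.succ)) ^ 2) := by
      simp_rw [show ∀ b, a + b - c = b - (c - a) from fun b => by ring]
      exact ih _ _ (fun i => hp0 i.succ) (fun i => hp1 i.succ) (c - a)
    have hV := berSVar_nonneg (fun i => hp0 i.succ) (fun i => hp1 i.succ) (s ∘ Fin.succ)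
    have hp := hp0 0
    have hq : 0 ≤ 1 - p 0 := by linarith [hp1 0]
    rw [pmfSum_succ, lexpect_conv, lexpect_berS hp, hY, hY, ← ENNReal.ofReal_mul hp,
      ← ENNReal.ofReal_mul hq, ← ENNReal.ofReal_add (by positivity) (by positivity)]
    congr 1
    simp only [berSVar, berSMean, Fin.sum_univ_succ, Function.comp_apply]
    ring

lemma toMeasure_pmfSum_berS_one_lt_le {m : ℕ} (p s : Fin m → ℝ) (hp0 : ∀ i, 0 ≤ p i)
    (hp1 : ∀ i, p i ≤ 1) {μ₀ : ℝ} (hμ1 : μ₀ < 1) (hE : berSMean p s ≤ μ₀) :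
    ((pmfSum fun i => berS (p i) (hp1 i) (s i)).toMeasure {x | 1 < x}).toReal
      ≤ berSVar p s / (1 - μ₀) ^ 2 := by
  have hgap : 0 < 1 - μ₀ := by linarith
  have hmarkov := toMeasure_mul_le_lexpect (pmfSum fun i => berS (p i) (hp1 i) (s i))
    measurableSet_Ioi (c := ENNReal.ofReal ((1 - μ₀) ^ 2))
    (g := fun x => ENNReal.ofReal ((x - berSMean p s) ^ 2))
    fun x (hx : 1 < x) => ENNReal.ofReal_le_ofReal (pow_le_pow_left₀ hgap.le (by linarith) 2)
  rw [lexpect_pmfSum_berS_sq_sub p s hp0 hp1, sub_self, zero_pow two_ne_zero, add_zero] at hmarkov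
  have hreal := ENNReal.toReal_mono ENNReal.ofReal_ne_top hmarkov
  rw [ENNReal.toReal_mul, ENNReal.toReal_ofReal (by positivity),
    ENNReal.toReal_ofReal (berSVar_nonneg hp0 hp1 s)] at hreal
  rwa [le_div_iff₀ (by positivity)]

/-- Minor items: if `Xᵢ ~ Ber(pᵢ, sᵢ)` are independent with `sᵢ ≤ s_min` and
`𝔼(B) = Σᵢ sᵢ pᵢ ≤ μ₀ < 1`, then `ℙ(B > 1) < s_min · μ₀ / (1 - μ₀)²`. -/
theorem stmt4 (m : ℕ) (p s : Fin m → ℝ)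
    (hp0 : ∀ i, 0 < p i) (hp1 : ∀ i, p i ≤ 1)
    (smin : ℝ) (hsmin : 0 < smin) (hs0 : ∀ i, 0 < s i) (hs : ∀ i, s i ≤ smin)
    (μ₀ : ℝ) (hμ0 : 0 < μ₀) (hμ1 : μ₀ < 1)
    (hE : ∑ i, s i * p i ≤ μ₀) :
    ((pmfSum fun i => berS (p i) (hp1 i) (s i)).toMeasure {x | 1 < x}).toReal
      < smin * μ₀ / (1 - μ₀) ^ 2 := by
  have hgap : 0 < 1 - μ₀ := by linarith
  calc _ ≤ berSVar p s / (1 - μ₀) ^ 2 :=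
        toMeasure_pmfSum_berS_one_lt_le p s (fun i => (hp0 i).le) hp1 hμ1 hE
    _ < smin * μ₀ / (1 - μ₀) ^ 2 := by
        gcongr
        exact berSVar_lt_mul hp0 hs0 hsmin hs hμ0 hE
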